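/- arXiv:0911.4281 — 4 statements merged into one kernel-verified Lean document; each statement's English description precedes it below -/
import Mathlib

section
/- Let γ∈[0,1] and let a_{ij}(v) = (δ_{ij} − v_i v_j/|v|²)|v|^{γ+2} for v∈ℝ³\{0} and i,j∈{1,2,3}. There exists a constant C̃>0, depending only on γ, such that for every multi-index β∈ℕ³ with |β|≥2 and all v with |v|≥1: |∂_v^β a_{ij}(v)| ≤ C̃^{|β|} |β|! (1+|v|^γ). -/
open MeasureTheory Real

noncomputable section

/-- Velocity space ℝ³. -/
abbrev R3 : Type := EuclideanSpace ℝ (Fin 3)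

/-- Size |α| of a multi-index α ∈ ℕ³. -/
def msize (α : Fin 3 → ℕ) : ℕ := ∑ i, α i

/-- Partial derivative ∂_{v_i}. -/
noncomputable def pd (i : Fin 3) (f : R3 → ℝ) : R3 → ℝ :=
  fun v => fderiv ℝ f v (EuclideanSpace.single i 1)

/-- Iterated partial derivative ∂_v^α for a multi-index α. -/
noncomputable def md (α : Fin 3 → ℕ) (f : R3 → ℝ) : R3 → ℝ :=
  (pd 0)^[α 0] ((pd 1)^[α 1] ((pd 2)^[α 2] f))

/-- Weighted L² norm: ‖g‖_{L²_s} = (∫ |g(v)|² (1+|v|²)^{s/2} dv)^{1/2}. -/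
noncomputable def wL2 (s : ℝ) (g : R3 → ℝ) : ℝ :=
  (∫ v : R3, (g v)^2 * (1 + ‖v‖^2) ^ (s/2)) ^ ((1:ℝ)/2)

/-- Weighted L¹ norm: ‖f‖_{L¹_s} = ∫ f(v) (1+|v|²)^{s/2} dv. -/
noncomputable def wL1 (s : ℝ) (f : R3 → ℝ) : ℝ :=
  ∫ v : R3, f v * (1 + ‖v‖^2) ^ (s/2)

/-- Squared weighted gradient norm ‖∇_v g‖²_{L²_s} = Σ_i ‖∂_{v_i} g‖²_{L²_s}. -/
noncomputable def gradSq (s : ℝ) (g : R3 → ℝ) : ℝ :=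
  ∑ i : Fin 3, (wL2 s (pd i g))^2

/-- The Landau kernel matrix a_{ij}(v) = (δ_{ij} − v_i v_j/|v|²)|v|^{γ+2}. -/
noncomputable def aK (γ : ℝ) (i j : Fin 3) (v : R3) : ℝ :=
  ((if i = j then (1:ℝ) else 0) - v i * v j / ‖v‖^2) * ‖v‖ ^ (γ + 2)

/-- b_j(v) = Σ_i ∂_{v_i} a_{ij}(v) = −2|v|^γ v_j. -/
noncomputable def bK (γ : ℝ) (j : Fin 3) (v : R3) : ℝ := -2 * ‖v‖ ^ γ * v j

/-- c(v) = Σ_{i,j} ∂²_{v_i v_j} a_{ij}(v) = −2(γ+3)|v|^γ. -/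
noncomputable def cK (γ : ℝ) (v : R3) : ℝ := -2 * (γ + 3) * ‖v‖ ^ γ

/-- Convolution (a*f)(v) = ∫ a(v−w) f(w) dw. -/
noncomputable def conv (a f : R3 → ℝ) : R3 → ℝ := fun v => ∫ w : R3, a (v - w) * f w

/-- Multi-index binomial coefficient C_μ^β = μ!/((μ−β)!β!). -/
def mchoose (μ β : Fin 3 → ℕ) : ℕ := ∏ i, (μ i).choose (β i)

/-- max over multi-indices ν ≤ β with |ν| = k of ‖∂_v^ν f‖_{L²}. -/
noncomputable def maxDeriv (β : Fin 3 → ℕ) (k : ℕ) (f : R3 → ℝ) : ℝ :=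
  sSup {x : ℝ | ∃ ν : Fin 3 → ℕ, ν ≤ β ∧ msize ν = k ∧ x = wL2 0 (md ν f)}

/-- Membership g ∈ L²_s(ℝ³). -/
def MemL2w (s : ℝ) (g : R3 → ℝ) : Prop :=
  AEStronglyMeasurable g (volume : Measure R3) ∧
    Integrable (fun v : R3 => (g v)^2 * (1 + ‖v‖^2) ^ (s/2))

/-! Off the origin `a_{ij}(v) = δ_{ij} |v|^{γ+2} - v_i v_j |v|^γ` is a combination of the functions
`v^m |v|^{d-|m|}`, homogeneous of degree `d = γ + 2`. The product rule gives
`∂_k (v^m |v|^{d-|m|}) = m_k v^{m-e_k} |v|^{d-|m|} + (d-|m|) v^{m+e_k} |v|^{d-|m|-2}`,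
again a combination of such functions, of degree `d - 1`. Hence after `n` derivatives we have
degree `γ + 2 - n` and multi-indices of size at most `n + 2`, and differentiating once more
multiplies the total size of the coefficients by at most
`2(n + 2) + |γ + 2 - n| ≤ (|γ| + 6)(n + 1)`, whence the factorial. Each term is bounded by `|v|^{γ+2-n} ≤ |v|^γ` once `|v| ≥ 1` and `n ≥ 2`. -/

open Finset
open scoped Nat

section InnerProductSpace
variable {F : Type*} [NormedAddCommGroup F] [InnerProductSpace ℝ F]

lemma hasFDerivAt_norm_rpow_of_ne_zero (e : ℝ) {v : F} (hv : v ≠ 0) :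
    HasFDerivAt (fun w : F => ‖w‖ ^ e) ((e * ‖v‖ ^ (e - 2)) • innerSL ℝ v) v := by
  have hsq (a : ℝ) (w : F) : ‖w‖ ^ a = (‖w‖ ^ 2) ^ (a / 2) := by
    rw [← rpow_natCast, ← rpow_mul (norm_nonneg w)]; ring_nf
  have hv2 : ‖v‖ ^ 2 ≠ 0 := by positivity
  convert (hasStrictFDerivAt_norm_sq v).hasFDerivAt.rpow_const (p := e / 2) (Or.inl hv2)
    using 1
  · exact funext (hsq e)
  · ext w
    simp only [smul_apply, smul_eq_mul, nsmul_eq_mul, hsq (e - 2)]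
    ring_nf

end InnerProductSpace

section Monomials
variable {ι : Type*} [Fintype ι]

lemma abs_prod_pow_le (v : EuclideanSpace ℝ ι) (m : ι → ℕ) :
    |∏ i, v i ^ m i| ≤ ‖v‖ ^ ∑ i, m i := by
  rw [abs_prod, ← prod_pow_eq_pow_sum]
  gcongr with i
  rw [abs_pow]
  gcongr
  exact PiLp.norm_apply_le v i

def homogMonomial (d : ℝ) (m : ι → ℕ) (v : EuclideanSpace ℝ ι) : ℝ :=
  (∏ i, v i ^ m i) * ‖v‖ ^ (d - ∑ i, m i)

lemma abs_homogMonomial_le (d : ℝ) (m : ι → ℕ) {v : EuclideanSpace ℝ ι} (hv : v ≠ 0) :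
    |homogMonomial d m v| ≤ ‖v‖ ^ d := by
  calc |homogMonomial d m v| = |∏ i, v i ^ m i| * ‖v‖ ^ (d - ∑ i, m i) := by
        rw [homogMonomial, abs_mul, abs_of_nonneg (rpow_nonneg (norm_nonneg v) _)]
    _ ≤ ‖v‖ ^ (∑ i, m i) * ‖v‖ ^ (d - ∑ i, m i) := by gcongr; exact abs_prod_pow_le v m
    _ = ‖v‖ ^ d := by rw [← rpow_natCast, ← rpow_add (norm_pos_iff.mpr hv)]; ring_nf

variable [DecidableEq ι]

lemma prod_pow_add_single (v : ι → ℝ) (m : ι → ℕ) (k : ι) :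
    ∏ i, v i ^ (m + Pi.single k 1 : ι → ℕ) i = v k * ∏ i, v i ^ m i := by
  simp only [Pi.add_apply, pow_add, prod_mul_distrib]
  rw [mul_comm, Fintype.prod_eq_single k (fun i hi => by simp [hi])]
  simp

lemma sum_add_single (m : ι → ℕ) (k : ι) :
    ∑ i, (m + Pi.single k 1 : ι → ℕ) i = ∑ i, m i + 1 := by
  simp [sum_add_distrib]

lemma sum_sub_single_add_one {m : ι → ℕ} {k : ι} (hk : 0 < m k) :
    ∑ i, (m - Pi.single k 1 : ι → ℕ) i + 1 = ∑ i, m i := by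
  rw [← sum_add_single, tsub_add_cancel_of_le]
  intro i
  by_cases hi : i = k
  · subst hi; simpa [Nat.one_le_iff_ne_zero] using hk.ne'
  · simp [hi]

lemma hasFDerivAt_prod_pow (m : ι → ℕ) (v : EuclideanSpace ℝ ι) :
    ∃ D : EuclideanSpace ℝ ι →L[ℝ] ℝ,
      HasFDerivAt (fun w : EuclideanSpace ℝ ι => ∏ i, w i ^ m i) D v ∧
      ∀ k, D (EuclideanSpace.single k 1) = m k * ∏ i, v i ^ (m - Pi.single k 1 : ι → ℕ) i := by
  refine ⟨_, HasFDerivAt.finsetProd fun i _ => (hasDerivAt_pow (m i) (v i)).comp_hasFDerivAt v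
    (EuclideanSpace.proj (𝕜 := ℝ) i).hasFDerivAt, fun k => ?_⟩
  rw [← mul_prod_erase univ _ (mem_univ k), prod_congr rfl fun j hj => by
    rw [Pi.sub_apply, Pi.single_eq_of_ne (ne_of_mem_erase hj), Nat.sub_zero]]
  simp [PiLp.single_apply]
  ring

-- For `m k = 0` the truncated `m - Pi.single k 1` is just `m`, but its coefficient `m k` vanishes.
lemma hasFDerivAt_homogMonomial (d : ℝ) (m : ι → ℕ) {v : EuclideanSpace ℝ ι} (hv : v ≠ 0) :
    ∃ D : EuclideanSpace ℝ ι →L[ℝ] ℝ, HasFDerivAt (homogMonomial d m) D v ∧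
      ∀ k, D (EuclideanSpace.single k 1) =
        m k * homogMonomial (d - 1) (m - Pi.single k 1) v +
          (d - ∑ i, m i) * homogMonomial (d - 1) (m + Pi.single k 1) v := by
  obtain ⟨D, hD, hDk⟩ := hasFDerivAt_prod_pow m v
  refine ⟨_, hD.mul (hasFDerivAt_norm_rpow_of_ne_zero _ hv), fun k => ?_⟩
  have hlower : (m k : ℝ) * homogMonomial (d - 1) (m - Pi.single k 1) v =
      m k * (∏ i, v i ^ (m - Pi.single k 1 : ι → ℕ) i) * ‖v‖ ^ (d - ∑ i, m i) := by
    rcases (m k).eq_zero_or_pos with hk | hk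
    · simp [hk]
    · rw [homogMonomial, ← sum_sub_single_add_one hk]
      push_cast; ring_nf
  have hnorm : ‖v‖ ^ (d - 1 - (∑ i, m i + 1 : ℕ)) = ‖v‖ ^ (d - ∑ i, m i - 2) := by
    push_cast; ring_nf
  rw [hlower, homogMonomial, sum_add_single, prod_pow_add_single, hnorm]
  simp only [add_apply, smul_apply, smul_eq_mul, hDk, innerSL_apply_apply,
    EuclideanSpace.inner_single_right, conj_trivial]
  ring

lemma hasFDerivAt_sum_homogMonomial {τ : Type*} [Fintype τ] (d : ℝ) (c : τ → ℝ)
    (m : τ → ι → ℕ) {v : EuclideanSpace ℝ ι} (hv : v ≠ 0) :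
    ∃ D : EuclideanSpace ℝ ι →L[ℝ] ℝ,
      HasFDerivAt (fun w => ∑ t, c t * homogMonomial d (m t) w) D v ∧
      ∀ k, D (EuclideanSpace.single k 1) = ∑ t, c t *
        (m t k * homogMonomial (d - 1) (m t - Pi.single k 1) v +
          (d - ∑ i, m t i) * homogMonomial (d - 1) (m t + Pi.single k 1) v) := by
  choose D hD hDk using fun t => hasFDerivAt_homogMonomial d (m t) hv
  refine ⟨_, HasFDerivAt.fun_sum fun t _ => (hD t).const_mul (c t), fun k => ?_⟩
  simp only [FunLike.coe_sum, Finset.sum_apply, smul_apply, smul_eq_mul, hDk]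

end Monomials

section HomogExpansion
variable {ι : Type*} [Fintype ι]

def HasHomogExpansion (d : ℝ) (N : ℕ) (A : ℝ) (f : EuclideanSpace ℝ ι → ℝ) : Prop :=
  ∃ (τ : Type) (_ : Fintype τ) (c : τ → ℝ) (m : τ → ι → ℕ), (∀ t, ∑ i, m t i ≤ N) ∧
    ∑ t, |c t| ≤ A ∧ ∀ v ≠ 0, f v = ∑ t, c t * homogMonomial d (m t) v

namespace HasHomogExpansion

variable {d : ℝ} {N : ℕ} {A : ℝ} {f : EuclideanSpace ℝ ι → ℝ}

lemma nonneg (h : HasHomogExpansion d N A f) : 0 ≤ A := by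
  obtain ⟨τ, _, c, -, -, hc, -⟩ := h
  exact (sum_nonneg fun t _ => abs_nonneg (c t)).trans hc

lemma mono (h : HasHomogExpansion d N A f) {B : ℝ} (hAB : A ≤ B) :
    HasHomogExpansion d N B f := by
  obtain ⟨τ, _, c, m, hm, hc, hf⟩ := h
  exact ⟨τ, _, c, m, hm, hc.trans hAB, hf⟩

lemma abs_le (h : HasHomogExpansion d N A f) {v : EuclideanSpace ℝ ι} (hv : v ≠ 0) :
    |f v| ≤ A * ‖v‖ ^ d := by
  obtain ⟨τ, _, c, m, -, hc, hf⟩ := h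
  calc |f v| ≤ ∑ t, |c t| * |homogMonomial d (m t) v| := by
        rw [hf v hv]
        exact (abs_sum_le_sum_abs _ _).trans_eq (by simp only [abs_mul])
    _ ≤ ∑ t, |c t| * ‖v‖ ^ d := by gcongr; exact abs_homogMonomial_le d _ hv
    _ ≤ A * ‖v‖ ^ d := by rw [← sum_mul]; gcongr

variable [DecidableEq ι]

lemma fderiv_single (h : HasHomogExpansion d N A f) (k : ι) :
    HasHomogExpansion (d - 1) (N + 1) ((2 * N + |d|) * A)
      (fun v => fderiv ℝ f v (EuclideanSpace.single k 1)) := by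
  obtain ⟨τ, _, c, m, hm, hc, hf⟩ := h
  refine ⟨τ ⊕ τ, inferInstance,
    Sum.elim (fun t => c t * m t k) (fun t => c t * (d - ∑ i, m t i)),
    Sum.elim (fun t => m t - Pi.single k 1) (fun t => m t + Pi.single k 1), ?_, ?_, ?_⟩
  · rintro (t | t)
    · exact (sum_le_sum fun i _ => tsub_le_self).trans (hm t |>.trans N.le_succ)
    · show ∑ i, (m t + Pi.single k 1 : ι → ℕ) i ≤ N + 1
      rw [sum_add_single]
      exact Nat.succ_le_succ (hm t)
  · have hmk (t : τ) : (m t k : ℝ) + |d - ∑ i, m t i| ≤ 2 * N + |d| := by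
      have hk : (m t k : ℝ) ≤ N := by
        exact_mod_cast (single_le_sum (fun i _ => Nat.zero_le _) (mem_univ k)).trans (hm t)
      have hsum : ((∑ i, m t i : ℕ) : ℝ) ≤ N := by exact_mod_cast hm t
      have habs : |d - ∑ i, m t i| ≤ |d| + ∑ i, m t i := by
        simpa only [Nat.abs_cast] using abs_sub d (∑ i, m t i : ℕ)
      linarith
    calc ∑ t, |Sum.elim (fun t => c t * m t k) (fun t => c t * (d - ∑ i, m t i)) t|
        = ∑ t, |c t| * (m t k + |d - ∑ i, m t i|) := by
          simp [Fintype.sum_sum_type, abs_mul, mul_add, sum_add_distrib]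
      _ ≤ ∑ t, |c t| * (2 * N + |d|) :=
          sum_le_sum fun t _ => mul_le_mul_of_nonneg_left (hmk t) (abs_nonneg _)
      _ ≤ (2 * N + |d|) * A := by
          rw [← sum_mul, mul_comm]; gcongr
  · intro v hv
    obtain ⟨D, hD, hDk⟩ := hasFDerivAt_sum_homogMonomial d c m hv
    have hfD : HasFDerivAt f D v := hD.congr_of_eventuallyEq <| by
      filter_upwards [eventually_ne_nhds hv] with w hw using hf w hw
    simp only [hfD.fderiv, hDk, Fintype.sum_sum_type, Sum.elim_inl, Sum.elim_inr,
      ← sum_add_distrib]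
    exact sum_congr rfl fun t _ => by ring

end HasHomogExpansion

end HomogExpansion

namespace HasHomogExpansion

lemma pd_succ {d A K : ℝ} {N n : ℕ} {f : R3 → ℝ}
    (hK : 2 * ((N + n : ℕ) : ℝ) + |d - n| ≤ K * (n + 1))
    (h : HasHomogExpansion (d - n) (N + n) (A * K ^ n * n !) f) (k : Fin 3) :
    HasHomogExpansion (d - (n + 1 : ℕ)) (N + (n + 1)) (A * K ^ (n + 1) * (n + 1)!) (pd k f) := by
  have hA : 0 ≤ A * K ^ n * n ! := h.nonneg
  have := (h.fderiv_single k).mono (B := A * K ^ (n + 1) * (n + 1)!) <| by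
    calc (2 * ((N + n : ℕ) : ℝ) + |d - n|) * (A * K ^ n * n !)
        ≤ K * (n + 1) * (A * K ^ n * n !) := by gcongr
      _ = A * K ^ (n + 1) * (n + 1)! := by push_cast [Nat.factorial_succ]; ring
  rwa [sub_sub, ← Nat.cast_add_one] at this

lemma iterate_pd {d A K : ℝ} {N n : ℕ} {f : R3 → ℝ}
    (hK : ∀ n : ℕ, 2 * ((N + n : ℕ) : ℝ) + |d - n| ≤ K * (n + 1))
    (h : HasHomogExpansion (d - n) (N + n) (A * K ^ n * n !) f) (k : Fin 3) (b : ℕ) :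
    HasHomogExpansion (d - (n + b : ℕ)) (N + (n + b)) (A * K ^ (n + b) * (n + b)!)
      ((pd k)^[b] f) := by
  induction b with
  | zero => simpa using h
  | succ b ih =>
    rw [Function.iterate_succ_apply']
    exact ih.pd_succ (hK _) k

lemma md {d A K : ℝ} {N : ℕ} {f : R3 → ℝ}
    (hK : ∀ n : ℕ, 2 * ((N + n : ℕ) : ℝ) + |d - n| ≤ K * (n + 1))
    (h : HasHomogExpansion d N A f) (β : Fin 3 → ℕ) :
    HasHomogExpansion (d - msize β) (N + msize β) (A * K ^ msize β * (msize β)!) (md β f) := by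
  have h0 : HasHomogExpansion (d - (0 : ℕ)) (N + 0) (A * K ^ 0 * 0 !) f := by simpa using h
  have := ((h0.iterate_pd hK 2 (β 2)).iterate_pd hK 1 (β 1)).iterate_pd hK 0 (β 0)
  have hβ : 0 + β 2 + β 1 + β 0 = msize β := by simp [msize, Fin.sum_univ_three]; ring
  rwa [hβ] at this

end HasHomogExpansion

lemma hasHomogExpansion_aK (γ : ℝ) (i j : Fin 3) : HasHomogExpansion (γ + 2) 2 2 (aK γ i j) := by
  refine ⟨Fin 2, inferInstance, ![if i = j then 1 else 0, -1],
    ![0, Pi.single i 1 + Pi.single j 1], ?_, ?_, ?_⟩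
  · intro t; fin_cases t <;> simp [sum_add_distrib]
  · simp only [Fin.sum_univ_two]
    split_ifs <;> norm_num
  · intro v hv
    have hmon : ∏ l, v l ^ (Pi.single i 1 + Pi.single j 1 : Fin 3 → ℕ) l = v i * v j := by
      rw [prod_pow_add_single, Fintype.prod_eq_single i fun l hl => by simp [hl]]
      simp [mul_comm]
    have hsum : ∑ l, (Pi.single i 1 + Pi.single j 1 : Fin 3 → ℕ) l = 2 := by
      simp [sum_add_distrib]
    have hsplit : ‖v‖ ^ (γ + 2) = ‖v‖ ^ γ * ‖v‖ ^ 2 := by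
      exact_mod_cast rpow_add_natCast (norm_ne_zero_iff.mpr hv) γ 2
    simp only [Fin.sum_univ_two, Matrix.cons_val_zero, Matrix.cons_val_one, homogMonomial, aK,
      hmon, hsum, Pi.zero_apply, pow_zero, prod_const_one, sum_const_zero, Nat.cast_zero,
      sub_zero, Nat.cast_ofNat, add_sub_cancel_right]
    rw [hsplit]
    field_simp
    ring

theorem deriv_aK_bound_far_general (γ : ℝ) :
    ∃ C : ℝ, 0 < C ∧ ∀ (β : Fin 3 → ℕ), 2 ≤ msize β → ∀ (i j : Fin 3) (v : R3),
      1 ≤ ‖v‖ →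
      |md β (aK γ i j) v| ≤
        C ^ (msize β) * ((msize β).factorial : ℝ) * (1 + ‖v‖ ^ γ) := by
  refine ⟨2 * (|γ| + 6), by positivity, fun β hβ i j v hv => ?_⟩
  have hK (n : ℕ) : 2 * ((2 + n : ℕ) : ℝ) + |γ + 2 - n| ≤ (|γ| + 6) * (n + 1) := by
    have habs : |γ + 2 - n| ≤ |γ| + 2 + n :=
      abs_le.mpr ⟨by linarith [neg_abs_le γ], by linarith [le_abs_self γ, n.cast_nonneg (α := ℝ)]⟩
    push_cast
    nlinarith [mul_nonneg (abs_nonneg γ) (n.cast_nonneg (α := ℝ))]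
  set n := msize β
  have hn : (2 : ℝ) ≤ n := by exact_mod_cast hβ
  calc |md β (aK γ i j) v| ≤ 2 * (|γ| + 6) ^ n * n.factorial * ‖v‖ ^ (γ + 2 - n) :=
        ((hasHomogExpansion_aK γ i j).md hK β).abs_le (norm_pos_iff.mp (one_pos.trans_le hv))
    _ ≤ (2 * (|γ| + 6)) ^ n * n.factorial * (1 + ‖v‖ ^ γ) := by
        rw [mul_pow]
        gcongr
        · exact le_self_pow₀ one_le_two (by omega)
        · exact (rpow_le_rpow_of_exponent_le hv (by linarith)).trans
            (le_add_of_nonneg_left zero_le_one)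

/-- For γ ∈ [0,1] there is C̃>0 depending only on γ such that for every
multi-index β with |β| ≥ 2, all i,j and all v with |v| ≥ 1,
  |∂_v^β a_{ij}(v)| ≤ C̃^{|β|} |β|! (1+|v|^γ). -/
theorem deriv_aK_bound_far (γ : ℝ) (hγ : γ ∈ Set.Icc (0:ℝ) 1) :
    ∃ C : ℝ, 0 < C ∧ ∀ (β : Fin 3 → ℕ), 2 ≤ msize β → ∀ (i j : Fin 3) (v : R3),
      1 ≤ ‖v‖ →
      |md β (aK γ i j) v| ≤
        C ^ (msize β) * ((msize β).factorial : ℝ) * (1 + ‖v‖ ^ γ) :=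
  deriv_aK_bound_far_general γ

end
end

section
/- Let γ∈[0,1] and b_j(v) = −2|v|^γ v_j for j∈{1,2,3}. There exists a constant C>0, depending only on γ, such that for every nonnegative f∈L¹_γ(ℝ³), every multi-index β∈ℕ³ with |β|=1, every j, and every v∈ℝ³: |∂_v^β (b_j*f)(v)| ≤ C ‖f‖_{L¹_γ} (1+|v|²)^{γ/2}. -/
/-!
Write `⟨v⟩ ^ s = (1 + |v|²) ^ (s / 2)`. The drift is `b_j(u) = -2 (|u| ^ γ u)_j`, and for `γ ≥ 0`
the map `u ↦ |u| ^ γ u` is differentiable everywhere (at `0` with derivative `0` when `γ > 0`),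
with derivative of norm at most `(1 + γ) |u| ^ γ ≤ (1 + γ) ⟨u⟩ ^ γ`. Peetre's inequality
`⟨v - w⟩ ^ γ ≤ 2 ^ (γ / 2) ⟨v⟩ ^ γ ⟨w⟩ ^ γ` dominates the differentiated integrand by
`⟨v⟩ ^ γ f(w) ⟨w⟩ ^ γ`, locally uniformly in `v`, so one may differentiate under the integral,
which gives the bound with `C = 2 (1 + γ) 2 ^ (γ / 2)`.

If `b_j(v - ·) f` is not integrable, the same estimate and the mean value theorem show that it is
integrable for no `v`, so `conv` is identically `0` (the junk value of the Bochner integral).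
-/

open MeasureTheory Real

noncomputable section

open Filter Topology Asymptotics Metric

theorem hasFDerivAt_norm_rpow_smul_zero {F : Type*} [NormedAddCommGroup F] [NormedSpace ℝ F]
    {γ : ℝ} (hγ : 0 < γ) : HasFDerivAt (fun x : F => ‖x‖ ^ γ • x) (0 : F →L[ℝ] F) 0 := by
  rw [hasFDerivAt_iff_isLittleO_nhds_zero]
  have h : Tendsto (fun x : F => ‖x‖ ^ γ) (𝓝 0) (𝓝 0) := by
    have hpow : Tendsto (fun t : ℝ => t ^ γ) (𝓝 0) (𝓝 0) := by
      simpa [zero_rpow hγ.ne'] using (continuousAt_rpow_const 0 γ (Or.inr hγ.le)).tendsto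
    exact hpow.comp tendsto_norm_zero
  simpa using ((isLittleO_one_iff ℝ).2 h).smul_isBigO (isBigO_refl (fun x : F => x) _)

section NormRpowSMul

variable {E : Type*} [NormedAddCommGroup E] [InnerProductSpace ℝ E] {γ : ℝ}

theorem exists_hasFDerivAt_norm_rpow_smul_of_ne_zero (hγ : 0 ≤ γ) {u : E} (hu : u ≠ 0) :
    ∃ L : E →L[ℝ] E, HasFDerivAt (fun x : E => ‖x‖ ^ γ • x) L u ∧ ‖L‖ ≤ (1 + γ) * ‖u‖ ^ γ := by
  have hu' : 0 < ‖u‖ := norm_pos_iff.2 hu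
  have hnorm : HasFDerivAt (‖·‖) (fderiv ℝ (‖·‖) u) u :=
    ((contDiffAt_norm ℝ hu).differentiableAt one_ne_zero).hasFDerivAt
  have hD : ‖fderiv ℝ (‖·‖) u‖ ≤ 1 := by
    simpa using norm_fderiv_le_of_lipschitz ℝ (x₀ := u) lipschitzWith_one_norm
  refine ⟨_, (hnorm.rpow_const (Or.inl hu'.ne')).smul (hasFDerivAt_id u), ?_⟩
  calc _ ≤ ‖u‖ ^ γ * 1 + γ * ‖u‖ ^ (γ - 1) * 1 * ‖u‖ := by
        grw [norm_add_le, norm_smul, ContinuousLinearMap.norm_smulRight_apply, norm_smul,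
          ContinuousLinearMap.norm_id_le, hD]
        simp [abs_of_nonneg hγ, abs_of_nonneg (rpow_nonneg hu'.le _)]
    _ = (1 + γ) * ‖u‖ ^ γ := by
        rw [rpow_sub_one hu'.ne']; field_simp

theorem exists_hasFDerivAt_norm_rpow_smul (hγ : 0 ≤ γ) (u : E) :
    ∃ L : E →L[ℝ] E, HasFDerivAt (fun x : E => ‖x‖ ^ γ • x) L u ∧ ‖L‖ ≤ (1 + γ) * ‖u‖ ^ γ := by
  rcases hγ.eq_or_lt with rfl | hγ'
  · refine ⟨ContinuousLinearMap.id ℝ E, ?_, ?_⟩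
    · simp only [rpow_zero, one_smul]
      exact hasFDerivAt_id u
    · simpa using ContinuousLinearMap.norm_id_le
  rcases eq_or_ne u 0 with rfl | hu
  · exact ⟨0, hasFDerivAt_norm_rpow_smul_zero hγ', by simp [zero_rpow hγ'.ne']⟩
  · exact exists_hasFDerivAt_norm_rpow_smul_of_ne_zero hγ hu

end NormRpowSMul

section BracketPow

variable {E : Type*} [SeminormedAddCommGroup E] {s : ℝ}

/-- The Japanese bracket `⟨v⟩ ^ s`. -/
def bracketPow (s : ℝ) (v : E) : ℝ := (1 + ‖v‖ ^ 2) ^ (s / 2)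

theorem bracketPow_pos (s : ℝ) (v : E) : 0 < bracketPow s v := by
  unfold bracketPow; positivity

theorem continuous_bracketPow (s : ℝ) : Continuous (bracketPow s : E → ℝ) :=
  (continuous_const.add (continuous_norm.pow 2)).rpow_const fun x =>
    Or.inl (by positivity : (1 + ‖x‖ ^ 2 : ℝ) ≠ 0)

theorem rpow_norm_le_bracketPow (hs : 0 ≤ s) (v : E) : ‖v‖ ^ s ≤ bracketPow s v := by
  calc ‖v‖ ^ s = (‖v‖ ^ 2) ^ (s / 2) := by
        rw [← rpow_natCast, ← rpow_mul (norm_nonneg v)]; ring_nf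
    _ ≤ bracketPow s v := by unfold bracketPow; gcongr; linarith

theorem bracketPow_le_of_norm_le (hs : 0 ≤ s) {v : E} {R : ℝ} (h : ‖v‖ ≤ R) :
    bracketPow s v ≤ (1 + R ^ 2) ^ (s / 2) := by
  unfold bracketPow; gcongr

theorem one_add_norm_sub_sq_le (a b : E) :
    1 + ‖a - b‖ ^ 2 ≤ 2 * (1 + ‖a‖ ^ 2) * (1 + ‖b‖ ^ 2) := by
  nlinarith [norm_sub_le a b, norm_nonneg (a - b), sq_nonneg (‖a‖ - ‖b‖), sq_nonneg (‖a‖ * ‖b‖)]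

theorem bracketPow_sub_le (hs : 0 ≤ s) (a b : E) :
    bracketPow s (a - b) ≤ 2 ^ (s / 2) * bracketPow s a * bracketPow s b := by
  unfold bracketPow
  rw [← mul_rpow (by positivity) (by positivity), ← mul_rpow (by positivity) (by positivity)]
  gcongr
  exact one_add_norm_sub_sq_le a b

end BracketPow

section LandauDrift

variable {γ : ℝ} {j : Fin 3}

theorem bK_eq_coord_norm_rpow_smul :
    bK γ j = fun u => -2 * (‖u‖ ^ γ • u) j := by
  ext u; simp [bK, mul_assoc]

theorem exists_hasFDerivAt_bK (hγ : 0 ≤ γ) (u : R3) :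
    ∃ L : R3 →L[ℝ] ℝ, HasFDerivAt (bK γ j) L u ∧ ‖L‖ ≤ 2 * (1 + γ) * ‖u‖ ^ γ := by
  obtain ⟨L, hL, hLnorm⟩ := exists_hasFDerivAt_norm_rpow_smul hγ u
  have hproj : ‖(EuclideanSpace.proj j : R3 →L[ℝ] ℝ)‖ ≤ 1 :=
    ContinuousLinearMap.opNorm_le_bound _ zero_le_one fun v => by
      simpa using PiLp.norm_apply_le v j
  refine ⟨(-2 : ℝ) • (EuclideanSpace.proj j).comp L, ?_, ?_⟩
  · rw [bK_eq_coord_norm_rpow_smul]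
    exact ((EuclideanSpace.proj j).hasFDerivAt.comp u hL).const_mul (-2)
  · grw [norm_smul, ContinuousLinearMap.opNorm_comp_le, hproj, hLnorm]
    norm_num [mul_assoc]

theorem differentiable_bK (hγ : 0 ≤ γ) : Differentiable ℝ (bK γ j) := fun u =>
  (exists_hasFDerivAt_bK hγ u).choose_spec.1.differentiableAt

theorem norm_fderiv_bK_le (hγ : 0 ≤ γ) (u : R3) :
    ‖fderiv ℝ (bK γ j) u‖ ≤ 2 * (1 + γ) * bracketPow γ u := by
  obtain ⟨L, hL, hLnorm⟩ := exists_hasFDerivAt_bK (j := j) hγ u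
  rw [hL.fderiv]
  exact hLnorm.trans (by gcongr; exact rpow_norm_le_bracketPow hγ u)

end LandauDrift

theorem AEStronglyMeasurable.of_integrable_mul_bracketPow {E : Type*} [NormedAddCommGroup E]
    [MeasurableSpace E] [OpensMeasurableSpace E] {μ : Measure E} {f : E → ℝ} {s : ℝ}
    (h : Integrable (fun w => f w * bracketPow s w) μ) : AEStronglyMeasurable f μ := by
  refine (h.aestronglyMeasurable.mul
    ((continuous_bracketPow s).inv₀ fun w => (bracketPow_pos s w).ne').aestronglyMeasurable).congr
    (ae_of_all _ fun w => ?_)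
  have := (bracketPow_pos s w).ne'
  simp only [Pi.mul_apply, Pi.inv_apply]
  field_simp

section Convolution

variable {K f : R3 → ℝ} {s M : ℝ}

theorem nonneg_of_norm_fderiv_le_mul_bracketPow (hK' : ∀ u, ‖fderiv ℝ K u‖ ≤ M * bracketPow s u) :
    0 ≤ M :=
  (mul_nonneg_iff_of_pos_right (bracketPow_pos s 0)).1 ((norm_nonneg _).trans (hK' 0))

theorem norm_fderiv_comp_sub_le (hs : 0 ≤ s) (hK' : ∀ u, ‖fderiv ℝ K u‖ ≤ M * bracketPow s u)
    {z : R3} {R : ℝ} (hz : ‖z‖ ≤ R) (w : R3) :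
    ‖fderiv ℝ K (z - w)‖ ≤ M * 2 ^ (s / 2) * (1 + R ^ 2) ^ (s / 2) * bracketPow s w := by
  have hM := nonneg_of_norm_fderiv_le_mul_bracketPow hK'
  calc ‖fderiv ℝ K (z - w)‖ ≤ M * (2 ^ (s / 2) * bracketPow s z * bracketPow s w) :=
        (hK' _).trans (by gcongr; exact bracketPow_sub_le hs z w)
    _ ≤ M * (2 ^ (s / 2) * (1 + R ^ 2) ^ (s / 2) * bracketPow s w) := by
        gcongr
        · exact (bracketPow_pos s w).le
        · exact bracketPow_le_of_norm_le hs hz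
    _ = _ := by ring

theorem abs_comp_sub_sub_comp_sub_le (hK : Differentiable ℝ K) (hs : 0 ≤ s)
    (hK' : ∀ u, ‖fderiv ℝ K u‖ ≤ M * bracketPow s u) (x y w : R3) :
    |K (y - w) - K (x - w)| ≤
      M * 2 ^ (s / 2) * (1 + (‖x‖ + ‖y‖) ^ 2) ^ (s / 2) * bracketPow s w * ‖y - x‖ := by
  have hx : x ∈ closedBall (0 : R3) (‖x‖ + ‖y‖) := by
    rw [mem_closedBall_zero_iff]; linarith [norm_nonneg y]
  have hy : y ∈ closedBall (0 : R3) (‖x‖ + ‖y‖) := by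
    rw [mem_closedBall_zero_iff]; linarith [norm_nonneg x]
  refine (convex_closedBall _ _).norm_image_sub_le_of_norm_fderiv_le (f := fun z => K (z - w))
    (fun z _ => (differentiableAt_comp_sub w).2 (hK _)) (fun z hz => ?_) hx hy
  rw [fderiv_comp_sub]
  exact norm_fderiv_comp_sub_le hs hK' (mem_closedBall_zero_iff.1 hz) w

theorem integrable_comp_sub_mul_of_integrable (hK : Differentiable ℝ K) (hs : 0 ≤ s)
    (hK' : ∀ u, ‖fderiv ℝ K u‖ ≤ M * bracketPow s u)
    (hfw : Integrable (fun w => f w * bracketPow s w)) {x : R3}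
    (hx : Integrable (fun w => K (x - w) * f w)) (y : R3) :
    Integrable (fun w => K (y - w) * f w) := by
  have hf := AEStronglyMeasurable.of_integrable_mul_bracketPow hfw
  have hdiff : Integrable (fun w => (K (y - w) - K (x - w)) * f w) := by
    refine (hfw.norm.const_mul
      (M * 2 ^ (s / 2) * (1 + (‖x‖ + ‖y‖) ^ 2) ^ (s / 2) * ‖y - x‖)).mono'
      ((((hK.continuous.comp (continuous_const.sub continuous_id)).sub
        (hK.continuous.comp (continuous_const.sub continuous_id))).aestronglyMeasurable).mul hf)
      (ae_of_all _ fun w => ?_)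
    rw [norm_mul, norm_mul, Real.norm_eq_abs, Real.norm_of_nonneg (bracketPow_pos s w).le]
    calc |K (y - w) - K (x - w)| * ‖f w‖
        ≤ M * 2 ^ (s / 2) * (1 + (‖x‖ + ‖y‖) ^ 2) ^ (s / 2) * bracketPow s w * ‖y - x‖ * ‖f w‖ := by
          gcongr; exact abs_comp_sub_sub_comp_sub_le hK hs hK' x y w
      _ = _ := by ring
  refine (hx.add hdiff).congr (ae_of_all _ fun w => ?_)
  simp only [Pi.add_apply]
  ring

theorem conv_eq_zero_of_not_integrable (hK : Differentiable ℝ K) (hs : 0 ≤ s)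
    (hK' : ∀ u, ‖fderiv ℝ K u‖ ≤ M * bracketPow s u)
    (hfw : Integrable (fun w => f w * bracketPow s w)) {v : R3}
    (hv : ¬ Integrable (fun w => K (v - w) * f w)) : conv K f = 0 := by
  ext x
  exact integral_undef fun hx => hv (integrable_comp_sub_mul_of_integrable hK hs hK' hfw hx v)

theorem hasFDerivAt_conv (hK : Differentiable ℝ K) (hs : 0 ≤ s)
    (hK' : ∀ u, ‖fderiv ℝ K u‖ ≤ M * bracketPow s u)
    (hfw : Integrable (fun w => f w * bracketPow s w)) {v : R3}
    (hv : Integrable (fun w => K (v - w) * f w)) :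
    HasFDerivAt (conv K f) (∫ w, f w • fderiv ℝ K (v - w)) v := by
  have hf := AEStronglyMeasurable.of_integrable_mul_bracketPow hfw
  refine hasFDerivAt_integral_of_dominated_of_fderiv_le (F' := fun x w => f w • fderiv ℝ K (x - w))
    (bound := fun w => M * 2 ^ (s / 2) * (1 + (‖v‖ + 1) ^ 2) ^ (s / 2) * ‖f w * bracketPow s w‖)
    (ball_mem_nhds v one_pos)
    (Eventually.of_forall fun x =>
      (hK.continuous.comp (continuous_const.sub continuous_id)).aestronglyMeasurable.mul hf)
    hv
    (hf.smul
      ((measurable_fderiv ℝ K).comp (measurable_const.sub measurable_id)).aestronglyMeasurable)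
    (ae_of_all _ fun w x hx => ?_) (hfw.norm.const_mul _)
    (ae_of_all _ fun w x _ => ((hasFDerivAt_comp_sub w).2 (hK _).hasFDerivAt).mul_const (f w))
  have hx : ‖x‖ ≤ ‖v‖ + 1 := by
    have := mem_ball_iff_norm.1 hx
    linarith [norm_le_norm_add_norm_sub' x v]
  rw [norm_smul, norm_mul, Real.norm_of_nonneg (bracketPow_pos s w).le]
  calc ‖f w‖ * ‖fderiv ℝ K (x - w)‖
      ≤ ‖f w‖ * (M * 2 ^ (s / 2) * (1 + (‖v‖ + 1) ^ 2) ^ (s / 2) * bracketPow s w) := by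
        gcongr; exact norm_fderiv_comp_sub_le hs hK' hx w
    _ = _ := by ring

theorem norm_fderiv_conv_le (hK : Differentiable ℝ K) (hs : 0 ≤ s)
    (hK' : ∀ u, ‖fderiv ℝ K u‖ ≤ M * bracketPow s u)
    (hfw : Integrable (fun w => f w * bracketPow s w)) (v : R3) :
    ‖fderiv ℝ (conv K f) v‖ ≤
      M * 2 ^ (s / 2) * bracketPow s v * ∫ w, ‖f w * bracketPow s w‖ := by
  by_cases hv : Integrable (fun w => K (v - w) * f w)
  · rw [(hasFDerivAt_conv hK hs hK' hfw hv).fderiv, ← integral_const_mul]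
    refine norm_integral_le_of_norm_le (hfw.norm.const_mul _) (ae_of_all _ fun w => ?_)
    rw [norm_smul, norm_mul, Real.norm_of_nonneg (bracketPow_pos s w).le]
    calc ‖f w‖ * ‖fderiv ℝ K (v - w)‖
        ≤ ‖f w‖ * (M * 2 ^ (s / 2) * bracketPow s v * bracketPow s w) := by
          gcongr; exact norm_fderiv_comp_sub_le hs hK' le_rfl w
      _ = _ := by ring
  · rw [conv_eq_zero_of_not_integrable hK hs hK' hfw hv, fderiv_zero, Pi.zero_apply, norm_zero]
    have := nonneg_of_norm_fderiv_le_mul_bracketPow hK'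
    have := bracketPow_pos s v
    positivity

end Convolution

theorem abs_pd_le_norm_fderiv (i : Fin 3) (g : R3 → ℝ) (v : R3) :
    |pd i g v| ≤ ‖fderiv ℝ g v‖ := by
  simpa [pd] using (fderiv ℝ g v).le_opNorm (EuclideanSpace.single i 1)

theorem exists_md_eq_pd_of_msize_eq_one {β : Fin 3 → ℕ} (hβ : msize β = 1) (g : R3 → ℝ) :
    ∃ i, md β g = pd i g := by
  simp only [msize, Fin.sum_univ_three] at hβ
  have : (β 0 = 1 ∧ β 1 = 0 ∧ β 2 = 0) ∨ (β 0 = 0 ∧ β 1 = 1 ∧ β 2 = 0) ∨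
      (β 0 = 0 ∧ β 1 = 0 ∧ β 2 = 1) := by omega
  rcases this with ⟨h0, h1, h2⟩ | ⟨h0, h1, h2⟩ | ⟨h0, h1, h2⟩
  · exact ⟨0, by simp [md, h0, h1, h2]⟩
  · exact ⟨1, by simp [md, h0, h1, h2]⟩
  · exact ⟨2, by simp [md, h0, h1, h2]⟩

/-- For γ ∈ [0,1] and b_j(v) = −2|v|^γ v_j, there is C>0 depending only on γ such
that for every nonnegative f ∈ L¹_γ(ℝ³), every multi-index β with |β| = 1,
every j and every v,
  |∂_v^β (b_j*f)(v)| ≤ C ‖f‖_{L¹_γ} (1+|v|²)^{γ/2}. -/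
theorem deriv_conv_bK_bound (γ : ℝ) (hγ : γ ∈ Set.Icc (0:ℝ) 1) :
    ∃ C : ℝ, 0 < C ∧ ∀ f : R3 → ℝ, (∀ v, 0 ≤ f v) →
      Integrable (fun v : R3 => f v * (1 + ‖v‖ ^ 2) ^ (γ / 2)) →
      ∀ β : Fin 3 → ℕ, msize β = 1 → ∀ j : Fin 3, ∀ v : R3,
        |md β (conv (bK γ j) f) v| ≤ C * wL1 γ f * (1 + ‖v‖ ^ 2) ^ (γ / 2) := by
  have hγ0 : 0 ≤ γ := hγ.1
  refine ⟨2 * (1 + γ) * 2 ^ (γ / 2), by positivity, fun f hf hfw β hβ j v => ?_⟩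
  obtain ⟨i, hi⟩ := exists_md_eq_pd_of_msize_eq_one hβ (conv (bK γ j) f)
  have hwL1 : ∫ w, ‖f w * bracketPow γ w‖ = wL1 γ f :=
    integral_congr_ae (ae_of_all _ fun w =>
      Real.norm_of_nonneg (mul_nonneg (hf w) (bracketPow_pos γ w).le))
  calc |md β (conv (bK γ j) f) v|
      ≤ ‖fderiv ℝ (conv (bK γ j) f) v‖ := hi ▸ abs_pd_le_norm_fderiv i _ v
    _ ≤ 2 * (1 + γ) * 2 ^ (γ / 2) * bracketPow γ v * ∫ w, ‖f w * bracketPow γ w‖ :=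
        norm_fderiv_conv_le (differentiable_bK hγ0) hγ0 (norm_fderiv_bK_le hγ0) hfw v
    _ = 2 * (1 + γ) * 2 ^ (γ / 2) * wL1 γ f * (1 + ‖v‖ ^ 2) ^ (γ / 2) := by
        rw [hwL1, bracketPow]; ring

end
end

section
/- For every real σ≥1 and all integers a,b with 3≤b≤a: a!/(b!(a−b)!) · ((b−3)!)^σ · ((a−b)!)^σ ≤ (6a/b³) · ((a−1)!)^σ. -/
/-!
Write `X = (b-3)! (a-b)!` and `Z = (a-1)!`. Since `X` divides `(a-3)!`, we have `X ≤ Z`; hence for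
`σ ≥ 1` it suffices to prove the case `σ = 1`, because `X^σ = X · X^(σ-1) ≤ X · Z^(σ-1)`.
For `σ = 1` the left side is `a! (b-3)! / b! = a Z / (b(b-1)(b-2))`, and `b³ ≤ 6 b(b-1)(b-2)` for `b ≥ 3`.
-/

open MeasureTheory Real

noncomputable section

theorem Nat.factorial_mul_factorial_le_factorial_add (i j : ℕ) :
    i.factorial * j.factorial ≤ (i + j).factorial :=
  Nat.le_of_dvd (Nat.factorial_pos _) (Nat.factorial_mul_factorial_dvd_factorial_add i j)

theorem Nat.pow_three_le_six_mul_descFactorial_three {b : ℕ} (hb : 3 ≤ b) :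
    b ^ 3 ≤ 6 * b.descFactorial 3 := by
  obtain ⟨c, rfl⟩ : ∃ c, b = c + 3 := ⟨b - 3, by omega⟩
  simp only [Nat.descFactorial_succ, Nat.descFactorial_zero, Nat.sub_zero,
    show c + 3 - 2 = c + 1 by omega, show c + 3 - 1 = c + 2 by omega]
  ring_nf
  omega

theorem factorial_div_mul_factorial_le {a b : ℕ} (hb : 3 ≤ b) (hba : b ≤ a) :
    (a.factorial : ℝ) / ((b.factorial : ℝ) * ((a - b).factorial : ℝ))
        * (((b - 3).factorial : ℝ) * ((a - b).factorial : ℝ))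
      ≤ (6 * (a : ℝ) / (b : ℝ) ^ 3) * ((a - 1).factorial : ℝ) := by
  have ha : (a : ℝ) * (a - 1).factorial = a.factorial := by
    exact_mod_cast Nat.mul_factorial_pred (by omega)
  have hbfact : ((b - 3).factorial : ℝ) * b.descFactorial 3 = b.factorial := by
    exact_mod_cast Nat.factorial_mul_descFactorial hb
  have hcube : (b : ℝ) ^ 3 ≤ 6 * b.descFactorial 3 := by
    exact_mod_cast Nat.pow_three_le_six_mul_descFactorial_three hb
  have hD : (0 : ℝ) < b.descFactorial 3 := by
    exact_mod_cast Nat.descFactorial_pos.mpr hb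
  have hb0 : (0 : ℝ) < b := by exact_mod_cast (show 0 < b by omega)
  rw [← ha, ← hbfact, div_mul_eq_mul_div, div_mul_eq_mul_div,
    div_le_div_iff₀ (by positivity) (by positivity)]
  have hZ : (0 : ℝ) ≤ a * (a - 1).factorial * ((b - 3).factorial * (a - b).factorial) := by
    positivity
  calc (a : ℝ) * (a - 1).factorial * ((b - 3).factorial * (a - b).factorial) * b ^ 3
      ≤ a * (a - 1).factorial * ((b - 3).factorial * (a - b).factorial)
          * (6 * b.descFactorial 3) := mul_le_mul_of_nonneg_left hcube hZ
    _ = 6 * a * (a - 1).factorial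
          * ((b - 3).factorial * b.descFactorial 3 * (a - b).factorial) := by ring

theorem Real.mul_rpow_le_mul_rpow_of_mul_le {c d x z σ : ℝ} (hc : 0 ≤ c) (hx : 0 ≤ x)
    (hxz : x ≤ z) (hσ : 1 ≤ σ) (h : c * x ≤ d * z) : c * x ^ σ ≤ d * z ^ σ := by
  have hsplit : ∀ y : ℝ, 0 ≤ y → y ^ σ = y * y ^ (σ - 1) := fun y hy => by
    rw [← Real.rpow_one_add' hy (by linarith), add_sub_cancel]
  rw [hsplit x hx, hsplit z (hx.trans hxz), ← mul_assoc, ← mul_assoc]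
  exact mul_le_mul h (Real.rpow_le_rpow hx hxz (by linarith)) (Real.rpow_nonneg hx _)
    ((mul_nonneg hc hx).trans h)

/-- For every real σ ≥ 1 and integers 3 ≤ b ≤ a:
  a!/(b!(a−b)!) · ((b−3)!)^σ · ((a−b)!)^σ ≤ (6a/b³) · ((a−1)!)^σ. -/
theorem factorial_combinatorial_estimate_one (σ : ℝ) (hσ : 1 ≤ σ) (a b : ℕ)
    (hb : 3 ≤ b) (hba : b ≤ a) :
    (a.factorial : ℝ) / ((b.factorial : ℝ) * ((a - b).factorial : ℝ))
        * ((b - 3).factorial : ℝ) ^ σ * ((a - b).factorial : ℝ) ^ σ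
      ≤ (6 * (a : ℝ) / (b : ℝ) ^ 3) * ((a - 1).factorial : ℝ) ^ σ := by
  have hX : (b - 3).factorial * (a - b).factorial ≤ (a - 1).factorial := by
    calc (b - 3).factorial * (a - b).factorial ≤ (b - 3 + (a - b)).factorial :=
          Nat.factorial_mul_factorial_le_factorial_add _ _
      _ ≤ (a - 1).factorial := Nat.factorial_le (by omega)
  rw [mul_assoc, ← Real.mul_rpow (by positivity) (by positivity)]
  exact Real.mul_rpow_le_mul_rpow_of_mul_le (by positivity) (by positivity) (by exact_mod_cast hX)
    hσ (factorial_div_mul_factorial_le hb hba)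

end
end

section
/- For every real σ≥1 and all integers a,b with 2≤b≤a−1: a!/(b!(a−b)!) · ((a−b−1)!)^σ · ((b−2)!)^σ ≤ (2a/(b²(a−b))) · ((a−1)!)^σ. -/
open MeasureTheory Real

noncomputable section

/-! Write `K = (a - b - 1)! (b - 2)!` and `M = (a - 1)!`. For `σ = 1` the inequality is
`a! K / (b! (a - b)!) = a M / (b (b - 1) (a - b)) ≤ 2 a M / (b² (a - b))`, i.e. `b ≤ 2 (b - 1)`.
For general `σ ≥ 1`, the left side is multiplied by `K ^ (σ - 1)` and the right side by
`M ^ (σ - 1)`, which is larger because `K ≤ M`. -/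

open scoped Nat

namespace Real

theorem rpow_le_mul_rpow_sub_one {x y σ : ℝ} (hx : 0 < x) (hxy : x ≤ y) (hσ : 1 ≤ σ) :
    x ^ σ ≤ x * y ^ (σ - 1) := by
  calc x ^ σ = x * x ^ (σ - 1) := by rw [rpow_sub_one hx.ne', mul_div_cancel₀ _ hx.ne']
    _ ≤ x * y ^ (σ - 1) := by gcongr

theorem mul_rpow_le_mul_rpow_of_mul_le_s19 {C D x y σ : ℝ} (hC : 0 ≤ C) (hx : 0 < x) (hxy : x ≤ y)
    (hσ : 1 ≤ σ) (h : C * x ≤ D * y) : C * x ^ σ ≤ D * y ^ σ := by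
  have hy : 0 < y := hx.trans_le hxy
  calc C * x ^ σ ≤ C * (x * y ^ (σ - 1)) := by gcongr; exact rpow_le_mul_rpow_sub_one hx hxy hσ
    _ = C * x * y ^ (σ - 1) := by ring
    _ ≤ D * y * y ^ (σ - 1) := by gcongr
    _ = D * y ^ σ := by rw [rpow_sub_one hy.ne']; field_simp

end Real

theorem Nat.factorial_mul_factorial_le_factorial_add_s19 (m n : ℕ) : m ! * n ! ≤ (m + n)! :=
  Nat.le_of_dvd (Nat.factorial_pos _) (Nat.factorial_mul_factorial_dvd_factorial_add m n)

theorem factorial_div_mul_factorial_sub_one_mul_factorial_sub_two_le {a b : ℕ} (hb : 2 ≤ b)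
    (hba : b < a) :
    (a ! : ℝ) / (b ! * (a - b)!) * ((a - b - 1)! * (b - 2)!)
      ≤ 2 * a / (b ^ 2 * (a - b)) * (a - 1)! := by
  obtain ⟨d, rfl⟩ : ∃ d, b = d + 2 := ⟨b - 2, by omega⟩
  obtain ⟨c, rfl⟩ : ∃ c, a = d + c + 3 := ⟨a - d - 3, by omega⟩
  rw [show d + c + 3 - (d + 2) = c + 1 by omega, show c + 1 - 1 = c by omega,
    show d + 2 - 2 = d by omega, show d + c + 3 - 1 = d + c + 2 by omega]
  set M : ℝ := ((d + c + 2).factorial : ℝ)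
  have hM : 0 < M := by positivity
  have hcancel : ((d + c + 3)! : ℝ) / ((d + 2)! * (c + 1)!) * (c ! * d !)
      = (d + c + 3) * M / ((d + 2) * (d + 1) * (c + 1)) := by
    rw [Nat.factorial_succ (d + c + 2), Nat.factorial_succ (d + 1), Nat.factorial_succ d,
      Nat.factorial_succ c]
    push_cast
    field_simp
    ring
  have hsub : ((d + c + 3 : ℕ) : ℝ) - (d + 2 : ℕ) = c + 1 := by push_cast; ring
  rw [hcancel, hsub, div_mul_eq_mul_div, div_le_div_iff₀ (by positivity) (by positivity)]
  push_cast
  have : (0 : ℝ) ≤ (d + c + 3) * M * (c + 1) * d := by positivity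
  nlinarith

/-- For every real σ ≥ 1 and integers 2 ≤ b ≤ a−1:
  a!/(b!(a−b)!) · ((a−b−1)!)^σ · ((b−2)!)^σ ≤ (2a/(b²(a−b))) · ((a−1)!)^σ. -/
theorem factorial_combinatorial_estimate_two (σ : ℝ) (hσ : 1 ≤ σ) (a b : ℕ)
    (hb : 2 ≤ b) (hba : b ≤ a - 1) :
    (a.factorial : ℝ) / ((b.factorial : ℝ) * ((a - b).factorial : ℝ))
        * ((a - b - 1).factorial : ℝ) ^ σ * ((b - 2).factorial : ℝ) ^ σ
      ≤ (2 * (a : ℝ) / ((b : ℝ) ^ 2 * ((a : ℝ) - (b : ℝ)))) * ((a - 1).factorial : ℝ) ^ σ := by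
  have hab : b < a := by omega
  have hK : (0 : ℝ) < (a - b - 1)! * (b - 2)! := by positivity
  have hKM : ((a - b - 1)! * (b - 2)! : ℝ) ≤ (a - 1)! := by
    exact_mod_cast (Nat.factorial_mul_factorial_le_factorial_add_s19 _ _).trans
      (Nat.factorial_le (by omega))
  rw [mul_assoc, ← Real.mul_rpow (by positivity) (by positivity)]
  exact Real.mul_rpow_le_mul_rpow_of_mul_le_s19 (by positivity) hK hKM hσ
    (factorial_div_mul_factorial_sub_one_mul_factorial_sub_two_le hb hab)

end
end
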